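/- arXiv:0804.2908 — 3 statements merged into one kernel-verified Lean document; each statement's English description precedes it below -/
import Mathlib

section
/- Let T be an n-consistent theory in a countable language with at most ℵ₀ isomorphism classes of n-generated models. Then there exists an n-generated model M of T such that for every generating tuple ā of M there is a formula φ(x̄) with: for every finitely generated model N of T generated by b̄, (M, ā) ≅ (N, b̄) if and only if N ⊨ φ(b̄). -/
open FirstOrder FirstOrder.Language Cardinal

namespace Paper

variable (L : FirstOrder.Language.{0, 0})

/-- A tuple `a` generates `M`: every element is the value of a term at `a`. -/
def Generates {M : Type*} [L.Structure M] {n : ℕ} (a : Fin n → M) : Prop :=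
  ∀ y : M, ∃ t : L.Term (Fin n), t.realize a = y

/-- A type over the language `L(c₁,…,cₙ)` in `k` free variables, represented as a set of
`L`-formulas in variables `Fin n ⊕ Fin k` (the first block playing the role of the constants). -/
def NType (n : ℕ) : Type := Σ k : ℕ, Set (L.Formula (Fin n ⊕ Fin k))

variable {L}

/-- The pair `(M, a)` realizes the type `p` (in the language with the constants interpreted
as `a`). -/
def RealizesNType {M : Type*} [L.Structure M] {n : ℕ} (a : Fin n → M) (p : NType L n) : Prop :=
  ∃ v : Fin p.1 → M, ∀ φ ∈ p.2, φ.Realize (Sum.elim a v)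

variable (L) in
/-- The type `pₙ(y) = { y ≠ τ(c̄) | τ an L-term }`. -/
def pType (n : ℕ) : NType L n :=
  ⟨1, { φ | ∃ t : L.Term (Fin n),
    φ = (Term.equal (t.relabel Sum.inl) (Term.var (Sum.inr 0))).not }⟩

/-- The complete type `p_ā(M)` of a tuple, viewed as a set of sentences of `L(c̄)`. -/
def ctype {M : Type*} [L.Structure M] {n : ℕ} (a : Fin n → M) : NType L n :=
  ⟨0, { φ | ∃ ψ : L.Formula (Fin n), ψ.Realize a ∧ φ = ψ.relabel Sum.inl }⟩

/-- A type (in the language with constants) is supported over a class `K` of models-with-tuples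
if some formula, satisfiable in `K`, forces realization of the type throughout `K`. -/
def Supported {T : L.Theory} {n : ℕ} (K : Set (Σ M : Theory.ModelType.{0, 0, 0} T, Fin n → M))
    (p : NType L n) : Prop :=
  ∃ φ : L.Formula (Fin n ⊕ Fin p.1),
    (∃ P ∈ K, ∃ v : Fin p.1 → P.1, φ.Realize (Sum.elim P.2 v)) ∧
    ∀ P ∈ K, ∀ v : Fin p.1 → P.1, φ.Realize (Sum.elim P.2 v) →
      ∀ ψ ∈ p.2, ψ.Realize (Sum.elim P.2 v)

/-- `rk`: `RankEq T n α M` means the `n`-rank of `M` is `α`. Defined by transfinite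
recursion: the rank is `α ≥ 1` iff for every generating `n`-tuple `ā`, `p_ā(M)` is
supported over the class of models (with generating tuple) of `T` omitting `pₙ` and the
complete types of all models of smaller rank. -/
def RankEq (T : L.Theory) (n : ℕ) : Ordinal.{0} → Theory.ModelType.{0, 0, 0} T → Prop :=
  Ordinal.lt_wf.fix fun α ih M =>
    1 ≤ α ∧ (∃ a : Fin n → M, Generates L a) ∧
      ∀ a : Fin n → M, Generates L a →
        Supported
          { P : Σ N : T.ModelType, Fin n → N |
            ¬ RealizesNType (L := L) P.2 (pType L n) ∧
            ∀ β : Ordinal, (h : β < α) → ∀ N : T.ModelType, ih β h N →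
              ∀ b : Fin n → N, Generates L b → ¬ RealizesNType (L := L) P.2 (ctype (L := L) b) }
          (ctype a)

/-- The class `K(T|P_{n,α})`: models of `T` with a distinguished `n`-tuple, omitting `pₙ`
(equivalently, generated by the tuple) and omitting the complete type of every `n`-generated
model of `T` of rank `< α`. -/
def Kclass (T : L.Theory) (n : ℕ) (α : Ordinal.{0}) :
    Set (Σ M : Theory.ModelType.{0, 0, 0} T, Fin n → M) :=
  { P | ¬ RealizesNType (L := L) P.2 (pType L n) ∧
    ∀ β : Ordinal, β < α → ∀ N : T.ModelType, RankEq T n β N →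
      ∀ b : Fin n → N, Generates L b → ¬ RealizesNType (L := L) P.2 (ctype (L := L) b) }

variable (L) in
/-- `n`-generated models of `T` (with countable carrier). -/
abbrev NGenModel (T : L.Theory) (n : ℕ) : Type 1 :=
  { M : Theory.ModelType.{0, 0, 0} T // ∃ a : Fin n → M, Generates L a }

instance isoSetoid {T : L.Theory} {n : ℕ} : Setoid (NGenModel L T n) where
  r M N := Nonempty (M.1 ≃[L] N.1)
  iseqv := ⟨fun M => ⟨FirstOrder.Language.Equiv.refl L M.1⟩, fun ⟨e⟩ => ⟨e.symm⟩, fun ⟨e⟩ ⟨f⟩ => ⟨FirstOrder.Language.Equiv.comp f e⟩⟩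

variable (L) in
/-- `α_n(T)`: the number of isomorphism classes of `n`-generated models of `T`. -/
def alphaCard (T : L.Theory) (n : ℕ) : Cardinal.{1} :=
  Cardinal.mk (Quotient (isoSetoid (L := L) (T := T) (n := n)))

variable (L) in
/-- `T` is `n`-consistent: it has an `n`-generated model. -/
def NConsistent (T : L.Theory) (n : ℕ) : Prop :=
  ∃ M : Theory.ModelType.{0, 0, 0} T, ∃ a : Fin n → M, Generates L a


/-! ### Universal / existential formulas, ∀∃ theories -/

variable (L) in
/-- A universal formula: universal quantifiers over a quantifier-free formula. -/
def IsUniversalFormula {α : Type} (φ : L.Formula α) : Prop :=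
  ∃ (k : ℕ) (ψ : L.BoundedFormula α k), ψ.IsQF ∧ φ = ψ.alls

variable (L) in
/-- An existential formula: existential quantifiers over a quantifier-free formula. -/
def IsExistentialFormula {α : Type} (φ : L.Formula α) : Prop :=
  ∃ (k : ℕ) (ψ : L.BoundedFormula α k), ψ.IsQF ∧ φ = ψ.exs

/-- Iterated existential quantification of the last `k` bounded variables. -/
def exsTo {α : Type} : ∀ {m k : ℕ}, L.BoundedFormula α (m + k) → L.BoundedFormula α m
  | _, 0, φ => φ
  | _, _ + 1, φ => exsTo φ.ex

variable (L) in
/-- A `∀∃`-sentence: `∀ x̄ ∃ ȳ ψ` with `ψ` quantifier-free. -/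
def IsAESentence (σ : L.Sentence) : Prop :=
  ∃ (m k : ℕ) (ψ : L.BoundedFormula Empty (m + k)), ψ.IsQF ∧ σ = (exsTo ψ).alls

variable (L) in
/-- A `∀∃`-theory. -/
def IsAETheory (T : L.Theory) : Prop := ∀ σ ∈ T, IsAESentence L σ

/-- The universal type `p_{ā,∀}(M)` of a tuple: universal sentences of `L(c̄)` true of `ā`. -/
def utype {M : Type*} [L.Structure M] {n : ℕ} (a : Fin n → M) : NType L n :=
  ⟨0, { φ | ∃ ψ : L.Formula (Fin n),
    IsUniversalFormula L ψ ∧ ψ.Realize a ∧ φ = ψ.relabel Sum.inl }⟩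

/-- A universal type is existentially supported over a class `K` if some existential formula,
satisfiable in `K`, forces its realization throughout `K`. -/
def ESupported {T : L.Theory} {n : ℕ} (K : Set (Σ M : Theory.ModelType.{0, 0, 0} T, Fin n → M))
    (p : NType L n) : Prop :=
  ∃ φ : L.Formula (Fin n ⊕ Fin p.1), IsExistentialFormula L φ ∧
    (∃ P ∈ K, ∃ v : Fin p.1 → P.1, φ.Realize (Sum.elim P.2 v)) ∧
    ∀ P ∈ K, ∀ v : Fin p.1 → P.1, φ.Realize (Sum.elim P.2 v) →
      ∀ ψ ∈ p.2, ψ.Realize (Sum.elim P.2 v)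

/-- `Rk`: the rank defined from universal types and existential supports. -/
def URankEq (T : L.Theory) (n : ℕ) : Ordinal.{0} → Theory.ModelType.{0, 0, 0} T → Prop :=
  Ordinal.lt_wf.fix fun α ih M =>
    1 ≤ α ∧ (∃ a : Fin n → M, Generates L a) ∧
      ∀ a : Fin n → M, Generates L a →
        ESupported
          { P : Σ N : Theory.ModelType.{0, 0, 0} T, Fin n → N |
            ¬ RealizesNType (L := L) P.2 (pType L n) ∧
            ∀ β : Ordinal, (h : β < α) → ∀ N : Theory.ModelType.{0, 0, 0} T, ih β h N →
              ∀ b : Fin n → N, Generates L b → ¬ RealizesNType (L := L) P.2 (utype b) }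
          (utype a)

/-- The class `K(T|Q_{n,α})` of the universal rank. -/
def UKclass (T : L.Theory) (n : ℕ) (α : Ordinal.{0}) :
    Set (Σ M : Theory.ModelType.{0, 0, 0} T, Fin n → M) :=
  { P | ¬ RealizesNType (L := L) P.2 (pType L n) ∧
    ∀ β : Ordinal, β < α → ∀ N : Theory.ModelType.{0, 0, 0} T, URankEq T n β N →
      ∀ b : Fin n → N, Generates L b → ¬ RealizesNType (L := L) P.2 (utype b) }

/-! ### Types in finitely many variables, classes of models, omitting types -/

variable (L) in
/-- A type in finitely many variables. -/
def MType : Type := Σ k : ℕ, Set (L.Formula (Fin k))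

variable (L) in
/-- A type all of whose formulas are universal. -/
def IsUniversalMType (p : MType L) : Prop := ∀ φ ∈ p.2, IsUniversalFormula L φ

/-- A model realizes a type if some tuple satisfies all of its formulas. -/
def MRealizes {T : L.Theory} (M : Theory.ModelType.{0, 0, 0} T) (p : MType L) : Prop :=
  ∃ v : Fin p.1 → M, ∀ φ ∈ p.2, φ.Realize v

/-- The class `K(T|P)` of models of `T` omitting every type in `P`. -/
def KTP (T : L.Theory) (P : Set (MType L)) : Set (Theory.ModelType.{0, 0, 0} T) :=
  { M | ∀ p ∈ P, ¬ MRealizes M p }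

/-- A type is supported over a class `K` of models of `T`. -/
def MSupported {T : L.Theory} (K : Set (Theory.ModelType.{0, 0, 0} T)) (q : MType L) : Prop :=
  ∃ φ : L.Formula (Fin q.1),
    (∃ M ∈ K, ∃ v : Fin q.1 → M, φ.Realize v) ∧
    ∀ M ∈ K, ∀ v : Fin q.1 → M, φ.Realize v → ∀ ψ ∈ q.2, ψ.Realize v

/-- A universal type is existentially supported over a class `K` of models of `T`. -/
def MESupported {T : L.Theory} (K : Set (Theory.ModelType.{0, 0, 0} T)) (q : MType L) : Prop :=
  ∃ φ : L.Formula (Fin q.1), IsExistentialFormula L φ ∧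
    (∃ M ∈ K, ∃ v : Fin q.1 → M, φ.Realize v) ∧
    ∀ M ∈ K, ∀ v : Fin q.1 → M, φ.Realize v → ∀ ψ ∈ q.2, ψ.Realize v


/-! ### Groups -/

/-- The function symbols of the language of groups. -/
inductive GroupFunc : ℕ → Type
  | mul : GroupFunc 2
  | inv : GroupFunc 1
  | one : GroupFunc 0

/-- The first-order language of groups. -/
def grpLang : FirstOrder.Language.{0, 0} := ⟨GroupFunc, fun _ => Empty⟩

/-- Any group is a `grpLang`-structure. -/
instance grpStructure (G : Type*) [Group G] : grpLang.Structure G where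
  funMap {n} f v :=
    match f with
    | .mul => v 0 * v 1
    | .inv => (v 0)⁻¹
    | .one => 1
  RelMap {n} r := r.elim

/-- The universal theory `Th_∀(H)` of a group `H`. -/
def uTheoryOf (H : Type*) [Group H] : grpLang.Theory :=
  { σ | IsUniversalFormula grpLang σ ∧ H ⊨ σ }

/-- The algebraic set `V(S)` defined by a set `S ⊆ H ∗ F(x₁,…,xₙ)` of equations. -/
def Vset {H : Type} [Group H] {n : ℕ} (S : Set (Monoid.Coprod H (FreeGroup (Fin n)))) :
    Set (Fin n → H) :=
  { g | ∀ s ∈ S, Monoid.Coprod.lift (MonoidHom.id H) (FreeGroup.lift g) s = 1 }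

/-- A group `H` is equationally noetherian if every algebraic set over `H` is defined by a
finite subsystem. -/
def EquationallyNoetherian (H : Type) [Group H] : Prop :=
  ∀ (n : ℕ) (S : Set (Monoid.Coprod H (FreeGroup (Fin n)))),
    ∃ S₀ ⊆ S, S₀.Finite ∧ Vset S = Vset S₀

/-- Bundled finitely generated `H`-limit groups (with countable-universe carrier):
finitely generated groups satisfying the universal theory of `H`. -/
def LimitGroup (H : Type) [Group H] : Type 1 :=
  { G : GrpCat.{0} // Group.FG G ∧ (G : Type) ⊨ uTheoryOf H }

instance limitGroupSetoid {H : Type} [Group H] : Setoid (LimitGroup H) where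
  r A B := Nonempty ((A.1 : Type) ≃* (B.1 : Type))
  iseqv := ⟨fun A => ⟨MulEquiv.refl _⟩, fun ⟨e⟩ => ⟨e.symm⟩, fun ⟨e⟩ ⟨f⟩ => ⟨e.trans f⟩⟩

/-- `GRank H G γ` : the group `G`, as a model of `Th_∀(H)`, has universal rank `Rk(G) = γ`
(with respect to some tuple-length). -/
def GRank (H : Type) [Group H] (G : Type) [Group G] (hmod : G ⊨ uTheoryOf H)
    (γ : Ordinal.{0}) : Prop :=
  ∃ n : ℕ, URankEq (uTheoryOf H) n γ
    (@Theory.ModelType.of grpLang (uTheoryOf H) G _ hmod One.instNonempty)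

/-- `G` is `H`-determined: some finite set `X ⊆ G \ {1}` is such that every homomorphism
from `G` to an `H`-limit group killing no element of `X` is injective. -/
def HDetermined (H : Type) [Group H] (G : Type) [Group G] : Prop :=
  ∃ X : Finset G, (1 : G) ∉ X ∧
    ∀ (L' : Type) [Group L'], Group.FG L' → (L' ⊨ uTheoryOf H) →
      ∀ f : G →* L', (∀ x ∈ X, f x ≠ 1) → Function.Injective f

end Paper

/-!
If some generating tuple `ā` of an `n`-generated model `M` has a supported complete type, i.e. a
single formula `φ` implies the whole type of `ā` for every generating tuple of a model of `T`, then
`φ` characterizes `(M, ā)` up to isomorphism, since a generated structure is determined by the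
complete type of its generators; and being supported does not depend on the choice of generators.
Some generating tuple must have a supported type: otherwise a Henkin construction, diagonalizing
against the countably many types of generating tuples (countable as there are at most `ℵ₀` models),
yields an `n`-generated model whose generators omit all of these types, including their own.
-/

namespace Paper

open Set Function Order

variable {L : FirstOrder.Language.{0, 0}} {n : ℕ}

theorem _root_.FirstOrder.Language.Theory.Imp.realize_formula {T : L.Theory} {α : Type}
    {φ ψ : L.Formula α} (h : φ ⟹[T] ψ) (M : Theory.ModelType.{0, 0, 0} T) {v : α → M}
    (hφ : φ.Realize v) : ψ.Realize v :=
  h M v default hφ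

theorem realize_subst_sumElim_var {α β : Type} {M : Type*} [L.Structure M]
    (χ : L.Formula (α ⊕ β)) (t : β → L.Term α) (v : α → M) :
    Formula.Realize (χ.subst (Sum.elim Term.var t)) v ↔
      χ.Realize (Sum.elim v fun i => (t i).realize v) := by
  show BoundedFormula.Realize _ v default ↔ _
  rw [BoundedFormula.realize_subst, ← Formula.Realize]
  congr! 1
  ext (i | i) <;> rfl

def tp {α : Type} {M : Type*} [L.Structure M] (a : α → M) : Set (L.Formula α) :=
  { ψ | ψ.Realize a }

section Tp

variable {α : Type} {M N : Type*} [L.Structure M] [L.Structure N]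

@[simp]
theorem mem_tp {a : α → M} {ψ : L.Formula α} : ψ ∈ tp a ↔ ψ.Realize a := Iff.rfl

theorem tp_eq_of_subset {a : α → M} {b : α → N} (h : tp (L := L) a ⊆ tp b) :
    tp (L := L) a = tp b := by
  refine h.antisymm fun ψ hψ => not_not.1 fun hna => ?_
  exact (Formula.realize_not.1 (h (Formula.realize_not.2 hna))) hψ

theorem tp_comp_equiv (e : M ≃[L] N) (a : α → M) : tp (L := L) (e ∘ a) = tp a :=
  Set.ext fun ψ => StrongHomClass.realize_formula e ψ

theorem subst_mem_tp_iff {β : Type} {a : α → M} {t : β → L.Term α} {ψ : L.Formula β} :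
    ψ.subst t ∈ tp a ↔ ψ ∈ tp fun i => (t i).realize a :=
  BoundedFormula.realize_subst

end Tp

section Generates

variable {M N : Type*} [L.Structure M] [L.Structure N]

theorem Generates.of_realize_terms {d : Fin n → M} {t : Fin n → L.Term (Fin n)}
    (h : Generates L fun i => (t i).realize d) : Generates L d := fun y => by
  obtain ⟨r, rfl⟩ := h y
  exact ⟨r.subst t, Term.realize_subst⟩

theorem Generates.exists_equiv {a : Fin n → M} {b : Fin n → N} (ha : Generates L a)
    (hb : Generates L b) (h : tp (L := L) a = tp b) : ∃ e : M ≃[L] N, ∀ i, e (a i) = b i := by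
  have hmem (φ : L.Formula (Fin n)) : φ.Realize a ↔ φ.Realize b := Set.ext_iff.1 h φ
  have hterm (t s : L.Term (Fin n)) : t.realize a = s.realize a ↔ t.realize b = s.realize b := by
    simpa only [Formula.realize_equal] using hmem (t.equal s)
  choose ta hta using ha
  let F : M → N := fun y => (ta y).realize b
  have hF (t : L.Term (Fin n)) : F (t.realize a) = t.realize b := (hterm _ t).1 (hta _)
  have hFinj : Injective F := fun y y' hyy' => by
    rw [← hta y, ← hta y']
    exact (hterm _ _).2 hyy'
  have hFsurj : Surjective F := fun z => by
    obtain ⟨t, rfl⟩ := hb z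
    exact ⟨_, hF t⟩
  refine ⟨⟨Equiv.ofBijective F ⟨hFinj, hFsurj⟩, fun {m} f x => ?_, fun {m} r x => ?_⟩,
    fun i => hF (Term.var i)⟩
  all_goals have hx : x = fun i => (ta (x i)).realize a := (funext fun i => hta (x i)).symm
  · show F (Structure.funMap f x) = Structure.funMap f (F ∘ x)
    conv_lhs => rw [hx]
    exact hF (Term.func f fun i => ta (x i))
  · show Structure.RelMap r (F ∘ x) ↔ Structure.RelMap r x
    conv_rhs => rw [hx]
    have hr := (hmem (r.formula fun i => ta (x i))).symm
    rwa [Formula.realize_rel, Formula.realize_rel] at hr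

end Generates

section Supports

variable {T : L.Theory}

variable (T) in
def GenSatisfiable (φ : L.Formula (Fin n)) : Prop :=
  ∃ (N : Theory.ModelType.{0, 0, 0} T) (b : Fin n → N), Generates L b ∧ φ.Realize b

variable (T) in
def Supports (φ : L.Formula (Fin n)) (p : Set (L.Formula (Fin n))) : Prop :=
  GenSatisfiable T φ ∧
    ∀ (N : Theory.ModelType.{0, 0, 0} T) (b : Fin n → N), Generates L b → φ.Realize b → p ⊆ tp b

variable {M : Theory.ModelType.{0, 0, 0} T} {a : Fin n → M} {φ : L.Formula (Fin n)}

theorem Supports.realize (h : Supports T φ (tp a)) : φ.Realize a := by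
  obtain ⟨⟨N, b, hb, hφb⟩, hforce⟩ := h
  rwa [← mem_tp, tp_eq_of_subset (hforce N b hb hφb)]

theorem Supports.exists_equiv_iff_realize (hφ : Supports T φ (tp a)) (ha : Generates L a)
    {N : Theory.ModelType.{0, 0, 0} T} {b : Fin n → N} (hb : Generates L b) :
    (∃ e : M ≃[L] N, ∀ i, e (a i) = b i) ↔ φ.Realize b := by
  refine ⟨fun ⟨e, he⟩ => ?_, fun hφb => ha.exists_equiv hb (tp_eq_of_subset (hφ.2 N b hb hφb))⟩
  rw [← funext he, ← mem_tp, ← Function.comp_def, tp_comp_equiv]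
  exact hφ.realize

/-- If `a' = t(a)` and `a = s(a')`, then `φ(s(x)) ∧ x = t(s(x))` supports the type of `a'`. -/
theorem exists_supports_tp_of_generates {a' : Fin n → M} (ha : Generates L a)
    (ha' : Generates L a') (h : ∃ φ, Supports T φ (tp a)) : ∃ φ', Supports T φ' (tp a') := by
  obtain ⟨φ, hφ⟩ := h
  choose t ht using fun i => ha (a' i)
  choose s hs using fun i => ha' (a i)
  refine ⟨φ.subst s ⊓ Formula.iInf fun i => (Term.var i).equal ((t i).subst s),
    ⟨M, a', ha', ?_⟩, fun N c hc hφc => ?_⟩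
  · simp only [Formula.realize_inf, Formula.realize_iInf, Formula.realize_equal,
      Term.realize_subst, Term.realize_var, hs, ht]
    exact ⟨subst_mem_tp_iff.2 ((funext hs).symm ▸ hφ.realize), fun _ => trivial⟩
  · simp only [Formula.realize_inf, Formula.realize_iInf, Formula.realize_equal,
      Term.realize_subst, Term.realize_var] at hφc
    obtain ⟨hφd, hcd⟩ := hφc
    set d : Fin n → N := fun j => (s j).realize c
    have hcd : (fun i => (t i).realize d) = c := (funext hcd).symm
    have hd : Generates L d := (hcd ▸ hc).of_realize_terms
    intro ψ hψ
    rw [← hcd, ← subst_mem_tp_iff]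
    refine hφ.2 N d hd (subst_mem_tp_iff.1 hφd) (subst_mem_tp_iff.2 ?_)
    rwa [funext ht]

end Supports

variable (L) in
def genTypes (T : L.Theory) (n : ℕ) : Set (Set (L.Formula (Fin n))) :=
  { p | ∃ (N : Theory.ModelType.{0, 0, 0} T) (b : Fin n → N), Generates L b ∧ tp b = p }

/-- Every generating tuple is a tuple of terms in the generators of a fixed representative of its
isomorphism class. -/
theorem countable_genTypes [Countable L.Symbols] {T : L.Theory}
    (hα : alphaCard L T n ≤ ℵ₀) : (genTypes L T n).Countable := by
  have : Countable (Quotient (isoSetoid (L := L) (T := T) (n := n))) := mk_le_aleph0_iff.1 hα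
  choose gen hgen using fun q : Quotient (isoSetoid (L := L) (T := T) (n := n)) => q.out.2
  refine (countable_range fun qt : _ × (Fin n → L.Term (Fin n)) =>
    tp (L := L) fun i => (qt.2 i).realize (gen qt.1)).mono ?_
  rintro _ ⟨N, b, hb, rfl⟩
  let X : NGenModel L T n := ⟨N, b, hb⟩
  obtain ⟨e⟩ : Nonempty ((⟦X⟧ : Quotient _).out.1 ≃[L] N) := Quotient.mk_out X
  choose t ht using fun i => hgen ⟦X⟧ (e.symm (b i))
  refine ⟨(⟦X⟧, t), ?_⟩
  simp only [ht]
  exact tp_comp_equiv e.symm b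

/-- Take the ultraproduct of the witnesses along an ultrafilter finer than the cofinite filter. -/
theorem exists_realize_of_imp_chain {T : L.Theory} {α : Type} (θ : ℕ → L.Formula α)
    (hchain : ∀ j k, j ≤ k → θ k ⟹[T] θ j)
    (hsat : ∀ k, ∃ (M : Theory.ModelType.{0, 0, 0} T) (v : α → M), (θ k).Realize v) :
    ∃ (P : Theory.ModelType.{0, 0, 0} T) (v : α → P), ∀ k, (θ k).Realize v := by
  choose M v hv using hsat
  let u : Ultrafilter ℕ := .of Filter.cofinite
  have : (u : Filter ℕ).Product (fun k => M k) ⊨ T :=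
    ⟨fun φ hφ => (Ultraproduct.sentence_realize φ).2
      (Filter.Eventually.of_forall fun k => Theory.realize_sentence_of_mem T hφ)⟩
  refine ⟨.of T ((u : Filter ℕ).Product fun k => M k), fun a =>
    ((fun k => v k a : ∀ k, M k) : (u : Filter ℕ).Product fun k => M k),
    fun j => (Ultraproduct.realize_formula_cast _ _).2 ?_⟩
  have hj : ∀ᶠ k in (u : Filter ℕ), j ≤ k := Ultrafilter.of_le _ <| by
    rw [Nat.cofinite_eq_atTop]
    exact Filter.eventually_ge_atTop j
  exact hj.mono fun k hjk => (hchain j k hjk).realize_formula (M k) (hv k)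

section TermWitnesses

variable {α : Type} {P : Type*} [L.Structure P]

theorem mem_closure_range_iff {b : α → P} {y : P} :
    y ∈ Substructure.closure L (range b) ↔ ∃ t : L.Term α, t.realize b = y := by
  refine ⟨fun hy => ?_, fun ⟨t, ht⟩ =>
    ht ▸ t.realize_mem b fun i => Substructure.subset_closure (mem_range_self i)⟩
  obtain ⟨t, rfl⟩ := Substructure.mem_closure_iff_exists_term.1 hy
  refine ⟨t.relabel (rangeSplitting b), ?_⟩
  rw [Term.realize_relabel]
  exact congrArg t.realize (funext fun y => apply_rangeSplitting b y)

def HasTermWitnesses (b : α → P) : Prop :=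
  ∀ χ : L.Formula (α ⊕ Fin 1), (∃ w, χ.Realize (Sum.elim b w)) →
    ∃ t : Fin 1 → L.Term α, χ.Realize (Sum.elim b fun i => (t i).realize b)

/-- Tarski–Vaught: a formula with parameters from the closure becomes a formula over `b` once each
parameter is written as a term in `b`. -/
theorem HasTermWitnesses.isElementary_closure {b : α → P} (hb : HasTermWitnesses (L := L) b) :
    (Substructure.closure L (range b)).IsElementary := by
  refine Substructure.isElementary_of_exists _ fun k φ x a hφa => ?_
  choose st hst using fun j => mem_closure_range_iff.1 (x j).2
  let g : Empty ⊕ Fin (k + 1) → L.Term (α ⊕ Fin 1) :=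
    Sum.elim Empty.elim (Fin.snoc (fun j => (st j).relabel Sum.inl) (Term.var (Sum.inr 0)))
  have hχ (w : Fin 1 → P) : Formula.Realize (φ.toFormula.subst g) (Sum.elim b w) ↔
      φ.Realize default (Fin.snoc ((↑) ∘ x) (w 0)) := by
    show BoundedFormula.Realize _ _ default ↔ _
    rw [BoundedFormula.realize_subst, ← Formula.Realize, BoundedFormula.realize_toFormula]
    congr! 1
    ext j
    refine Fin.lastCases ?_ (fun j => ?_) j <;> simp [g, ← hst]
  obtain ⟨t, ht⟩ := hb _ ⟨fun _ => a, (hχ _).2 hφa⟩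
  exact ⟨⟨(t 0).realize b, mem_closure_range_iff.2 ⟨_, rfl⟩⟩, (hχ _).1 ht⟩

theorem HasTermWitnesses.exists_generates_tp_eq {T : L.Theory} {P : Theory.ModelType.{0, 0, 0} T}
    {b : Fin n → P} (hb : HasTermWitnesses (L := L) b) :
    ∃ (M : Theory.ModelType.{0, 0, 0} T) (c : Fin n → M), Generates L c ∧ tp (L := L) c = tp b := by
  let S : L.ElementarySubstructure P := ⟨_, hb.isElementary_closure⟩
  let c : Fin n → S := fun i => ⟨b i, Substructure.subset_closure (mem_range_self i)⟩
  obtain ⟨t, -⟩ := hb ⊤ ⟨fun _ => Classical.arbitrary P, Formula.realize_top.2 trivial⟩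
  have : Nonempty S := ⟨⟨(t 0).realize b, mem_closure_range_iff.2 ⟨_, rfl⟩⟩⟩
  refine ⟨.of T S, c, fun y => ?_, Set.ext fun ψ => (S.subtype.map_formula ψ c).symm⟩
  obtain ⟨t, ht⟩ := mem_closure_range_iff.1 y.2
  exact ⟨t, Subtype.ext ((realize_term_substructure (S := S.toSubstructure) c t).symm.trans ht)⟩

end TermWitnesses

section Henkin

variable {T : L.Theory}

def Condition (T : L.Theory) (n : ℕ) : Type := {θ : L.Formula (Fin n) // GenSatisfiable T θ}

instance : Preorder (Condition T n) where
  le θ θ' := θ'.1 ⟹[T] θ.1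
  le_refl θ := Theory.Imp.refl θ.1
  le_trans _ _ _ h h' := h'.trans h

variable (T) in
def witnessing (χ : L.Formula (Fin n ⊕ Fin 1)) : Set (Condition T n) :=
  { θ | θ.1 ⟹[T] (χ.iExs (Fin 1)).not ∨
    ∃ t : Fin 1 → L.Term (Fin n), θ.1 ⟹[T] χ.subst (Sum.elim Term.var t) }

variable (T) in
def avoiding (p : Set (L.Formula (Fin n))) : Set (Condition T n) :=
  { θ | ∃ ψ ∈ p, θ.1 ⟹[T] ψ.not }

theorem isCofinal_witnessing (χ : L.Formula (Fin n ⊕ Fin 1)) : IsCofinal (witnessing T χ) := by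
  rintro ⟨θ, N, b, hb, hθb⟩
  by_cases hχ : ∃ w, χ.Realize (Sum.elim b w)
  · obtain ⟨w, hw⟩ := hχ
    obtain ⟨t, ht⟩ := hb (w 0)
    have hχt : Formula.Realize (χ.subst (Sum.elim Term.var fun _ => t)) b := by
      rw [realize_subst_sumElim_var]
      convert hw using 2
      funext i
      rw [Subsingleton.elim i 0, ht]
    exact ⟨⟨_, N, b, hb, Formula.realize_inf.2 ⟨hθb, hχt⟩⟩,
      Or.inr ⟨_, Theory.inf_imp_right _ _⟩, Theory.inf_imp_left _ _⟩
  · have hnχ : Formula.Realize (χ.iExs (Fin 1)).not b := by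
      rwa [Formula.realize_not, Formula.realize_iExs]
    exact ⟨⟨_, N, b, hb, Formula.realize_inf.2 ⟨hθb, hnχ⟩⟩,
      Or.inl (Theory.inf_imp_right _ _), Theory.inf_imp_left _ _⟩

theorem isCofinal_avoiding {p : Set (L.Formula (Fin n))} (hp : ∀ φ, ¬Supports T φ p) :
    IsCofinal (avoiding T p) := by
  rintro ⟨θ, hθ⟩
  obtain ⟨N, b, hb, hθb, ψ, hψp, hψb⟩ : ∃ (N : Theory.ModelType.{0, 0, 0} T) (b : Fin n → N),
      Generates L b ∧ θ.Realize b ∧ ∃ ψ ∈ p, ¬ψ.Realize b := by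
    simpa [Supports, hθ, Set.not_subset] using hp θ
  exact ⟨⟨_, N, b, hb, Formula.realize_inf.2 ⟨hθb, Formula.realize_not.2 hψb⟩⟩,
    ⟨ψ, hψp, Theory.inf_imp_right _ _⟩, Theory.inf_imp_left _ _⟩

/-- The limit of a generic sequence of conditions generates an elementary substructure because it
meets every `witnessing χ`, and it avoids its own type because it meets every `avoiding p`. -/
theorem exists_generates_supports_tp [Countable L.Symbols] (hcons : NConsistent L T n)
    (hα : alphaCard L T n ≤ ℵ₀) : ∃ (M : Theory.ModelType.{0, 0, 0} T) (a : Fin n → M),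
      Generates L a ∧ ∃ φ, Supports T φ (tp a) := by
  by_contra! hns
  have : Countable (genTypes L T n) := (countable_genTypes hα).to_subtype
  let := Encodable.ofCountable (L.Formula (Fin n ⊕ Fin 1) ⊕ genTypes L T n)
  let 𝒟 : L.Formula (Fin n ⊕ Fin 1) ⊕ genTypes L T n → Cofinal (Condition T n) :=
    Sum.elim (fun χ => ⟨_, isCofinal_witnessing χ⟩) fun p => ⟨_, isCofinal_avoiding <| by
      obtain ⟨N, a, ha, hp⟩ := p.2
      exact hp ▸ hns N a ha⟩
  let θ₀ : Condition T n := ⟨⊤, by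
    obtain ⟨M, a, ha⟩ := hcons
    exact ⟨M, a, ha, Formula.realize_top.2 trivial⟩⟩
  let θ := sequenceOfCofinals θ₀ 𝒟
  obtain ⟨P, b, hb⟩ := exists_realize_of_imp_chain (fun k => (θ k).1)
    (fun _ _ hjk => sequenceOfCofinals.monotone θ₀ 𝒟 hjk) fun k => by
      obtain ⟨N, b, -, hb⟩ := (θ k).2
      exact ⟨N, b, hb⟩
  have hwit : HasTermWitnesses (L := L) b := fun χ hχ => by
    obtain hno | ⟨t, ht⟩ := sequenceOfCofinals.encode_mem θ₀ 𝒟 (Sum.inl χ)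
    · exact absurd (Formula.realize_iExs.2 hχ) (hno.realize_formula P (hb _))
    · exact ⟨t, (realize_subst_sumElim_var _ _ _).1 (ht.realize_formula P (hb _))⟩
  obtain ⟨M, c, hc, hcb⟩ := hwit.exists_generates_tp_eq
  obtain ⟨ψ, hψ, hθψ⟩ := sequenceOfCofinals.encode_mem θ₀ 𝒟 (Sum.inr ⟨tp c, M, c, hc, rfl⟩)
  exact hθψ.realize_formula P (hb _) (mem_tp.1 (hcb ▸ hψ))

end Henkin

end Paper

/-- If `T` is `n`-consistent with at most `ℵ₀` classes of `n`-generated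
models, there is an `n`-generated model `M` of `T` such that for every generating tuple
`ā` there is a formula `φ` with: for every model `N` of `T` generated by `b̄`,
`(M, ā) ≅ (N, b̄)` iff `N ⊨ φ(b̄)`. -/
theorem stmt_8 (L : FirstOrder.Language.{0, 0}) [Countable L.Symbols] (T : L.Theory)
    (n : ℕ) (hcons : Paper.NConsistent L T n)
    (hα : Paper.alphaCard L T n ≤ Cardinal.aleph0) :
    ∃ M : FirstOrder.Language.Theory.ModelType.{0, 0, 0} T,
      (∃ a : Fin n → M, Paper.Generates L a) ∧
      ∀ a : Fin n → M, Paper.Generates L a →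
        ∃ φ : L.Formula (Fin n),
          ∀ (N : FirstOrder.Language.Theory.ModelType.{0, 0, 0} T) (b : Fin n → N),
            Paper.Generates L b →
            ((∃ e : (M : Type) ≃[L] (N : Type), ∀ i, e (a i) = b i) ↔ φ.Realize b) := by
  obtain ⟨M, a₀, ha₀, hsupp⟩ := Paper.exists_generates_supports_tp hcons hα
  refine ⟨M, ⟨a₀, ha₀⟩, fun a ha => ?_⟩
  obtain ⟨φ, hφ⟩ := Paper.exists_supports_tp_of_generates ha₀ ha hsupp
  exact ⟨φ, fun N b hb => hφ.exists_equiv_iff_realize ha hb⟩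
end

section
/- Let T be a ∀∃-theory in a countable language, P and Q countable sets of universal types. If K(T|P) is nonempty and each q ∈ Q is existentially unsupported over K(T|P), then there exists a countable model in K(T|P) omitting every q ∈ Q. -/
open FirstOrder FirstOrder.Language Cardinal

/-!
Henkin-style forcing. The variables `ℕ` name the elements of the model to be built, and a
condition is a quantifier-free formula in them that is satisfiable in `K(T|P)`. A descending chain
of conditions meets countably many requirements: every `f(x̄)` equals some variable, every instance
of a `∀∃` axiom of `T` has witnesses among the variables, and for every tuple of variables and
every type of `P ∪ Q` some formula `∀ȳ χ` of the type has its matrix `χ` refuted at the tuple and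
some further variables. For `q ∈ Q` this is where existential unsupportedness enters: projecting a
condition onto the tuple gives an existential formula, satisfiable in `K(T|P)`, so some model of
`K(T|P)` satisfies it at a tuple where `q` fails. The types of `P` are omitted throughout
`K(T|P)`, hence unsupported as well.

An ultraproduct along the chain realizes all the chosen formulas. The values of the variables form
a countable substructure of it, which inherits the chosen formulas because they are
quantifier-free; their witnesses make it a model of `T` omitting every type of `P ∪ Q`.
-/
universe u

namespace FirstOrder.Language

open Structure

variable {L : Language} {α β : Type*} {M N : Type*} [L.Structure M] [L.Structure N]

theorem BoundedFormula.IsQF.toFormula {n : ℕ} {φ : L.BoundedFormula α n} (h : φ.IsQF) :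
    φ.toFormula.IsQF := by
  induction h with
  | falsum => exact isQF_bot
  | of_isAtomic h =>
    cases h with
    | equal t₁ t₂ => exact (IsAtomic.equal _ _).isQF
    | rel R ts => exact (IsAtomic.rel _ _).isQF
  | imp _ _ ih₁ ih₂ => exact ih₁.imp ih₂

theorem BoundedFormula.IsQF.iInf [Finite β] {n : ℕ} {f : β → L.BoundedFormula α n}
    (h : ∀ b, (f b).IsQF) : (BoundedFormula.iInf f).IsQF := by
  let _ := Fintype.ofFinite β
  suffices ∀ l : List (L.BoundedFormula α n), (∀ φ ∈ l, φ.IsQF) → (l.foldr (· ⊓ ·) ⊤).IsQF from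
    this _ (by simpa using fun b => h b)
  intro l hl
  induction l with
  | nil => exact IsQF.top
  | cons φ l ih => exact (hl φ (by simp)).inf (ih fun ψ hψ => hl ψ (by simp [hψ]))

theorem Formula.realize_congr [DecidableEq α] (φ : L.Formula α) {v v' : α → M}
    (h : ∀ a ∈ φ.freeVarFinset, v a = v' a) : φ.Realize v ↔ φ.Realize v' := by
  have key := fun w : α → M => BoundedFormula.realize_restrictFreeVar (φ := φ) (f := id)
    (v := fun a => w a) (xs := default) w fun _ => rfl
  rw [Formula.Realize, ← key v, Formula.Realize, ← key v']
  simp only [funext fun a : φ.freeVarFinset => h a a.2]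

theorem Formula.realize_embedding_of_isQF {φ : L.Formula α} (h : φ.IsQF) (f : M ↪[L] N)
    {v : α → M} : φ.Realize (f ∘ v) ↔ φ.Realize v := by
  rw [Formula.Realize, Formula.Realize, ← h.realize_embedding f (xs := default),
    Subsingleton.elim (f ∘ default) default]

def Substructure.ofRange (v : ℕ → N)
    (hv : ∀ l (f : L.Functions l) (a : Fin l → ℕ), ∃ i, funMap f (v ∘ a) = v i) :
    L.Substructure N where
  carrier := Set.range v
  fun_mem f xs hxs := by
    choose a ha using hxs
    obtain ⟨i, hi⟩ := hv _ f a
    exact ⟨i, by rw [← hi]; congr 1; exact funext ha⟩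

theorem Formula.exists_realize_inf_relabel {θ : L.Formula ℕ} {n k : ℕ}
    (χ : L.Formula (Fin n ⊕ Fin k)) (a : Fin n → ℕ) {v : ℕ → M} (hv : θ.Realize v) {ys : Fin k → M}
    (hys : χ.Realize (Sum.elim (v ∘ a) ys)) :
    ∃ b : Fin k → ℕ, ∃ w : ℕ → M, (θ ⊓ χ.relabel (Sum.elim a b)).Realize w := by
  classical
  obtain ⟨m, hm⟩ := (θ.freeVarFinset ∪ Finset.univ.image a).exists_nat_subset_range
  have hlt : ∀ i ∈ θ.freeVarFinset ∪ Finset.univ.image a, i < m := fun i hi =>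
    Finset.mem_range.1 (hm hi)
  let w : ℕ → M := fun i => if h : m ≤ i ∧ i - m < k then ys ⟨i - m, h.2⟩ else v i
  have hw : ∀ i < m, w i = v i := fun i hi => dif_neg fun h => (h.1.not_gt hi)
  refine ⟨fun j => m + j, w, Formula.realize_inf.2 ⟨?_, ?_⟩⟩
  · exact (θ.realize_congr fun i hi => (hw i (hlt i (by simp [hi]))).symm).1 hv
  · rw [Formula.realize_relabel]
    convert hys using 2
    ext (i | j)
    · exact hw _ (hlt _ (by simp))
    · simp [w]

open Filter in
theorem Formula.exists_realize_of_forall_exists_realize_lt (δ : ℕ → L.Formula ℕ)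
    (h : ∀ n, ∃ (M : Type u) (_ : L.Structure M) (v : ℕ → M), ∀ j < n, (δ j).Realize v) :
    ∃ (N : Type u) (_ : L.Structure N) (v : ℕ → N), ∀ j, (δ j).Realize v := by
  choose M _ v hv using h
  have : ∀ n, Nonempty (M n) := fun n => ⟨v n 0⟩
  refine ⟨(hyperfilter ℕ : Filter ℕ).Product M, inferInstance,
    fun i => ((fun n => v n i : ∀ n, M n) : (hyperfilter ℕ : Filter ℕ).Product M), fun j => ?_⟩
  have hlarge : ∀ᶠ n in (hyperfilter ℕ : Filter ℕ), j < n :=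
    hyperfilter_le_cofinite (eventually_cofinite.2 (by simpa using Set.finite_le_nat j))
  exact (Ultraproduct.realize_formula_cast _ _).2 (hlarge.mono fun n hn => hv n j hn)

theorem Formula.exists_realize_of_dense {C : Set (L.Formula ℕ)}
    (hC : ∀ θ ∈ C, ∃ (M : Type u) (_ : L.Structure M) (v : ℕ → M), θ.Realize v)
    {θ₀ : L.Formula ℕ} (hθ₀ : θ₀ ∈ C) {𝒟 : Set (Set (L.Formula ℕ))} (h𝒟 : 𝒟.Countable)
    (hdense : ∀ D ∈ 𝒟, ∀ θ ∈ C, ∃ δ ∈ D, θ ⊓ δ ∈ C) :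
    ∃ (N : Type u) (_ : L.Structure N) (v : ℕ → N), ∀ D ∈ 𝒟, ∃ δ ∈ D, δ.Realize v := by
  rcases 𝒟.eq_empty_or_nonempty with rfl | h𝒟ne
  · obtain ⟨M, _, v, -⟩ := hC θ₀ hθ₀
    exact ⟨M, inferInstance, v, by simp⟩
  obtain ⟨D, rfl⟩ := h𝒟.exists_eq_range h𝒟ne
  choose δ hδD hδC using fun n => hdense (D n) (Set.mem_range_self n)
  let θ : ℕ → C := fun n => Nat.rec ⟨θ₀, hθ₀⟩ (fun n θn => ⟨θn.1 ⊓ δ n θn.1 θn.2, hδC n _ θn.2⟩) n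
  let ε : ℕ → L.Formula ℕ := fun n => δ n (θ n).1 (θ n).2
  have hθε : ∀ {M : Type u} [L.Structure M] (v : ℕ → M) n, (θ n).1.Realize v →
      ∀ j < n, (ε j).Realize v := by
    intro M _ v n
    induction n with
    | zero => simp
    | succ n ih =>
      intro hv j hj
      obtain ⟨hθn, hεn⟩ := Formula.realize_inf.1 hv
      rcases Nat.lt_succ_iff_lt_or_eq.1 hj with hj | rfl
      · exact ih hθn j hj
      · exact hεn
  obtain ⟨N, _, v, hv⟩ := Formula.exists_realize_of_forall_exists_realize_lt ε fun n => by
    obtain ⟨M, _, v, hv⟩ := hC _ (θ n).2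
    exact ⟨M, inferInstance, v, hθε v n hv⟩
  refine ⟨N, inferInstance, v, ?_⟩
  rintro _ ⟨n, rfl⟩
  exact ⟨ε n, hδD _ _ _, hv n⟩

end FirstOrder.Language

namespace Paper

open Structure

variable {L : FirstOrder.Language.{0, 0}} {T : L.Theory}

theorem realize_exsTo {α : Type} {M : Type*} [L.Structure M] {m : ℕ} :
    ∀ {k : ℕ} (φ : L.BoundedFormula α (m + k)) (v : α → M) (xs : Fin m → M),
      (exsTo φ).Realize v xs ↔ ∃ ys : Fin k → M, φ.Realize v (Fin.append xs ys)
  | 0, φ, v, xs => by simp [exsTo, Fin.append_right_nil]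
  | k + 1, φ, v, xs => by
    rw [exsTo, realize_exsTo φ.ex]
    simp only [BoundedFormula.realize_ex]
    constructor
    · rintro ⟨ys, y, h⟩
      exact ⟨Fin.snoc ys y, by rwa [Fin.append_snoc]⟩
    · rintro ⟨ys, h⟩
      exact ⟨Fin.init ys, ys (Fin.last k), by rwa [← Fin.append_snoc, Fin.snoc_init_self]⟩

theorem exists_isExistentialFormula_realize_iff {θ : L.Formula ℕ} (hθ : θ.IsQF) {n : ℕ}
    (a : Fin n → ℕ) :
    ∃ φ : L.Formula (Fin n), IsExistentialFormula L φ ∧ ∀ (M : Type*) [L.Structure M]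
      (u : Fin n → M), φ.Realize u ↔ ∃ v : ℕ → M, θ.Realize v ∧ v ∘ a = u := by
  classical
  obtain ⟨m, hm⟩ := (θ.freeVarFinset ∪ Finset.univ.image a).exists_nat_subset_range
  have hlt : ∀ i ∈ θ.freeVarFinset ∪ Finset.univ.image a, i < m := fun i hi =>
    Finset.mem_range.1 (hm hi)
  let c : ℕ → Fin (m + 1) := fun i => Fin.ofNat (m + 1) i
  have hc : ∀ i < m, (c i : ℕ) = i := fun i hi => Nat.mod_eq_of_lt (by omega)
  let ψ : L.Formula (Fin n ⊕ Fin (m + 1)) := θ.relabel (Sum.inr ∘ c) ⊓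
    Formula.iInf fun j => Term.equal (var (Sum.inl j)) (var (Sum.inr (c (a j))))
  have hψ : ψ.IsQF := (hθ.relabel _).inf (BoundedFormula.IsQF.iInf fun j =>
    (BoundedFormula.IsAtomic.equal _ _).isQF)
  refine ⟨Formula.iExs (Fin (m + 1)) ψ, ⟨_, _, hψ.relabel _, rfl⟩, fun M _ u => ?_⟩
  simp only [ψ, Formula.realize_iExs, Formula.realize_inf, Formula.realize_relabel,
    Formula.realize_iInf, Formula.realize_equal, Term.realize_var]
  constructor
  · rintro ⟨zs, hθzs, hzs⟩
    exact ⟨zs ∘ c, hθzs, funext fun j => (hzs j).symm⟩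
  · rintro ⟨v, hv, rfl⟩
    refine ⟨fun i => v i, (θ.realize_congr fun i hi => ?_).1 hv, fun j => ?_⟩
    · simp [hc i (hlt i (by simp [hi]))]
    · simp [hc _ (hlt (a j) (by simp))]

def conditions (K : Set (Theory.ModelType.{0, 0, 0} T)) : Set (L.Formula ℕ) :=
  {θ | θ.IsQF ∧ ∃ M ∈ K, ∃ v : ℕ → M, θ.Realize v}

def IsDense (K : Set (Theory.ModelType.{0, 0, 0} T)) (D : Set (L.Formula ℕ)) : Prop :=
  ∀ θ ∈ conditions K, ∃ δ ∈ D, θ ⊓ δ ∈ conditions K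

def instances {n k : ℕ} (χ : L.Formula (Fin n ⊕ Fin k)) (a : Fin n → ℕ) : Set (L.Formula ℕ) :=
  Set.range fun b : Fin k → ℕ => χ.relabel (Sum.elim a b)

theorem exists_realize_of_mem_instances {M : Type*} [L.Structure M] {n k : ℕ}
    {χ : L.Formula (Fin n ⊕ Fin k)} {a : Fin n → ℕ} {δ : L.Formula ℕ} (hδ : δ ∈ instances χ a)
    {v : ℕ → M} (hv : δ.Realize v) : ∃ b : Fin k → ℕ, χ.Realize (v ∘ Sum.elim a b) := by
  obtain ⟨b, rfl⟩ := hδ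
  exact ⟨b, Formula.realize_relabel.1 hv⟩

variable {K : Set (Theory.ModelType.{0, 0, 0} T)}

theorem top_mem_conditions (hK : K.Nonempty) : ⊤ ∈ conditions K := by
  obtain ⟨M, hM⟩ := hK
  exact ⟨BoundedFormula.IsQF.top, M, hM, fun _ => Classical.arbitrary M,
    Formula.realize_top.2 trivial⟩

theorem exists_mem_instances_inf_mem_conditions {θ : L.Formula ℕ} (hθ : θ.IsQF) {n k : ℕ}
    {χ : L.Formula (Fin n ⊕ Fin k)} (hχ : χ.IsQF) (a : Fin n → ℕ) {M : T.ModelType} (hM : M ∈ K)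
    {v : ℕ → M} (hv : θ.Realize v) {ys : Fin k → M} (hys : χ.Realize (Sum.elim (v ∘ a) ys)) :
    ∃ δ ∈ instances χ a, θ ⊓ δ ∈ conditions K := by
  obtain ⟨b, w, hw⟩ := Formula.exists_realize_inf_relabel χ a hv hys
  exact ⟨_, ⟨b, rfl⟩, hθ.inf (hχ.relabel _), M, hM, w, hw⟩

def funcTemplate {l : ℕ} (f : L.Functions l) : L.Formula (Fin l ⊕ Fin 1) :=
  Term.equal (func f fun i => var (Sum.inl i)) (var (Sum.inr 0))

theorem realize_funcTemplate {M : Type*} [L.Structure M] {l : ℕ} (f : L.Functions l)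
    (xs : Fin l → M) (ys : Fin 1 → M) :
    (funcTemplate f).Realize (Sum.elim xs ys) ↔ funMap f xs = ys 0 := by
  simp [funcTemplate]

theorem isDense_funcTemplate {l : ℕ} (f : L.Functions l) (a : Fin l → ℕ) :
    IsDense K (instances (funcTemplate f) a) := by
  rintro θ ⟨hθ, M, hM, v, hv⟩
  exact exists_mem_instances_inf_mem_conditions hθ (BoundedFormula.IsAtomic.equal _ _).isQF a hM hv
    ((realize_funcTemplate f _ fun _ => funMap f (v ∘ a)).2 rfl)

def axiomTemplate {a b : ℕ} (ψ : L.BoundedFormula Empty (a + b)) : L.Formula (Fin a ⊕ Fin b) :=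
  ψ.toFormula.relabel (Sum.elim Empty.elim (Fin.append Sum.inl Sum.inr))

theorem realize_axiomTemplate {M : Type*} [L.Structure M] {a b : ℕ}
    (ψ : L.BoundedFormula Empty (a + b)) (xs : Fin a → M) (ys : Fin b → M) :
    (axiomTemplate ψ).Realize (Sum.elim xs ys) ↔ ψ.Realize default (Fin.append xs ys) := by
  rw [axiomTemplate, Formula.realize_relabel, BoundedFormula.realize_toFormula,
    Subsingleton.elim (_ ∘ Sum.inl) default]
  congr!
  ext i
  refine Fin.addCases (fun i => ?_) (fun i => ?_) i <;> simp

theorem isQF_axiomTemplate {a b : ℕ} {ψ : L.BoundedFormula Empty (a + b)} (hψ : ψ.IsQF) :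
    (axiomTemplate ψ).IsQF :=
  hψ.toFormula.relabel _

theorem isDense_axiomTemplate {a b : ℕ} {ψ : L.BoundedFormula Empty (a + b)} (hψ : ψ.IsQF)
    (hψT : (exsTo ψ).alls ∈ T) (c : Fin a → ℕ) : IsDense K (instances (axiomTemplate ψ) c) := by
  rintro θ ⟨hθ, M, hM, v, hv⟩
  obtain ⟨ys, hys⟩ := (realize_exsTo ψ default (v ∘ c)).1
    (BoundedFormula.realize_alls.1 (T.realize_sentence_of_mem (M := M) hψT) _)
  exact exists_mem_instances_inf_mem_conditions hθ (isQF_axiomTemplate hψ) c hM hv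
    ((realize_axiomTemplate ψ _ ys).2 hys)

def omitSet (q : MType L) (a : Fin q.1 → ℕ) : Set (L.Formula ℕ) :=
  ⋃ (k : ℕ) (χ : L.BoundedFormula (Fin q.1) k) (_ : χ.IsQF ∧ χ.alls ∈ q.2),
    instances χ.not.toFormula a

theorem isDense_omitSet {q : MType L} (hq : IsUniversalMType L q) (hqK : ¬ MESupported K q)
    (a : Fin q.1 → ℕ) : IsDense K (omitSet q a) := by
  rintro θ ⟨hθ, M, hM, v, hv⟩
  obtain ⟨φ, hφ, hφθ⟩ := exists_isExistentialFormula_realize_iff hθ a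
  obtain ⟨M', hM', u, hu, ψ, hψ, hψu⟩ :
      ∃ M' ∈ K, ∃ u : Fin q.1 → M', φ.Realize u ∧ ∃ ψ ∈ q.2, ¬ ψ.Realize u := by
    by_contra! h
    exact hqK ⟨φ, hφ, ⟨M, hM, v ∘ a, (hφθ M _).2 ⟨v, hv, rfl⟩⟩, h⟩
  obtain ⟨v', hv', rfl⟩ := (hφθ M' u).1 hu
  obtain ⟨k, χ, hχ, rfl⟩ := hq ψ hψ
  obtain ⟨ys, hys⟩ : ∃ ys, ¬ χ.Realize (v' ∘ a) ys :=
    not_forall.1 (mt BoundedFormula.realize_alls.2 hψu)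
  obtain ⟨δ, hδ, hθδ⟩ := exists_mem_instances_inf_mem_conditions hθ hχ.not.toFormula a hM' hv'
    (ys := ys) ((BoundedFormula.realize_toFormula _ _).2 hys)
  exact ⟨δ, Set.mem_iUnion.2 ⟨k, Set.mem_iUnion₂.2 ⟨χ, ⟨hχ, hψ⟩, hδ⟩⟩, hθδ⟩

theorem not_mESupported_of_forall_not_mRealizes {p : MType L} (hp : ∀ M ∈ K, ¬ MRealizes M p) :
    ¬ MESupported K p := by
  rintro ⟨φ, -, ⟨M, hM, v, hv⟩, hφp⟩
  exact hp M hM ⟨v, hφp M hM v hv⟩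

def requirements (T : L.Theory) (Q : Set (MType L)) : Set (Set (L.Formula ℕ)) :=
  Set.range (fun x : (Σ l, L.Functions l × (Fin l → ℕ)) => instances (funcTemplate x.2.1) x.2.2) ∪
  (⋃ (a : ℕ) (b : ℕ) (ψ : L.BoundedFormula Empty (a + b)) (_ : ψ.IsQF ∧ (exsTo ψ).alls ∈ T),
    Set.range fun c : Fin a → ℕ => instances (axiomTemplate ψ) c) ∪
  ⋃ q ∈ Q, Set.range (omitSet q)

theorem countable_requirements [Countable L.Symbols] {Q : Set (MType L)} (hQ : Q.Countable) :
    (requirements T Q).Countable := by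
  have : ∀ l, Countable (L.Functions l) := fun l =>
    (sigma_mk_injective (β := L.Functions) (i := l)).countable
  have : ∀ n, Countable (L.BoundedFormula Empty n) := fun n =>
    (sigma_mk_injective (β := L.BoundedFormula Empty) (i := n)).countable
  refine ((Set.countable_range _).union ?_).union (hQ.biUnion fun q _ => Set.countable_range _)
  exact Set.countable_iUnion fun a => Set.countable_iUnion fun b => Set.countable_iUnion
    fun ψ => Set.countable_iUnion fun _ => Set.countable_range _

theorem isDense_requirements {Q : Set (MType L)} (hQuniv : ∀ q ∈ Q, IsUniversalMType L q)
    (hQK : ∀ q ∈ Q, ¬ MESupported K q) : ∀ D ∈ requirements T Q, IsDense K D := by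
  rintro D ((⟨⟨l, f, a⟩, rfl⟩ | hD) | hD)
  · exact isDense_funcTemplate f a
  · simp only [Set.mem_iUnion] at hD
    obtain ⟨a, b, ψ, ⟨hψ, hψT⟩, c, rfl⟩ := hD
    exact isDense_axiomTemplate hψ hψT c
  · simp only [Set.mem_iUnion] at hD
    obtain ⟨q, hq, a, rfl⟩ := hD
    exact isDense_omitSet (hQuniv q hq) (hQK q hq) a

section Generic

variable {Q : Set (MType L)} {N : Type} [L.Structure N] {v : ℕ → N}
  (hv : ∀ D ∈ requirements T Q, ∃ δ ∈ D, δ.Realize v)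
include hv

theorem exists_funMap_eq {l : ℕ} (f : L.Functions l) (a : Fin l → ℕ) :
    ∃ i, funMap f (v ∘ a) = v i := by
  obtain ⟨δ, hδ, hδv⟩ := hv _ (Or.inl (Or.inl ⟨⟨l, f, a⟩, rfl⟩))
  obtain ⟨b, hb⟩ := exists_realize_of_mem_instances hδ hδv
  exact ⟨b 0, (realize_funcTemplate f _ _).1 (by rwa [Sum.comp_elim] at hb)⟩

def genericSubstructure : L.Substructure N :=
  Substructure.ofRange v fun _ f a => exists_funMap_eq hv f a

def genericAssignment (i : ℕ) : genericSubstructure hv := ⟨v i, i, rfl⟩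

theorem genericAssignment_surjective : Function.Surjective (genericAssignment hv) := by
  rintro ⟨_, i, rfl⟩
  exact ⟨i, rfl⟩

theorem realize_genericAssignment_comp {β : Type*} {χ : L.Formula β} (hχ : χ.IsQF) (g : β → ℕ) :
    χ.Realize (genericAssignment hv ∘ g) ↔ χ.Realize (v ∘ g) :=
  (Formula.realize_embedding_of_isQF hχ (genericSubstructure hv).subtype).symm

theorem genericSubstructure_model (hAE : IsAETheory L T) : genericSubstructure hv ⊨ T := by
  refine (Theory.model_iff T).2 fun σ hσ => ?_
  obtain ⟨a, b, ψ, hψ, rfl⟩ := hAE σ hσ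
  refine BoundedFormula.realize_alls.2 fun xs => ?_
  obtain ⟨c, rfl⟩ := (genericAssignment_surjective hv).comp_left xs
  obtain ⟨δ, hδ, hδv⟩ := hv _ (Or.inl (Or.inr (by
    simp only [Set.mem_iUnion]
    exact ⟨a, b, ψ, ⟨hψ, hσ⟩, c, rfl⟩)))
  obtain ⟨d, hd⟩ := exists_realize_of_mem_instances hδ hδv
  rw [← realize_genericAssignment_comp hv (isQF_axiomTemplate hψ), Sum.comp_elim,
    realize_axiomTemplate] at hd
  exact (realize_exsTo ψ _ _).2 ⟨_, hd⟩

theorem exists_not_realize_genericAssignment {q : MType L} (hq : q ∈ Q)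
    (u : Fin q.1 → genericSubstructure hv) : ∃ ψ ∈ q.2, ¬ ψ.Realize u := by
  obtain ⟨a, rfl⟩ := (genericAssignment_surjective hv).comp_left u
  obtain ⟨δ, hδ, hδv⟩ := hv _ (Or.inr (Set.mem_biUnion hq ⟨a, rfl⟩))
  simp only [omitSet, Set.mem_iUnion] at hδ
  obtain ⟨k, χ, ⟨hχ, hχq⟩, hδ⟩ := hδ
  obtain ⟨d, hd⟩ := exists_realize_of_mem_instances hδ hδv
  rw [← realize_genericAssignment_comp hv hχ.not.toFormula, BoundedFormula.realize_toFormula] at hd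
  exact ⟨_, hχq, fun h => hd (BoundedFormula.realize_alls.1 h _)⟩

end Generic

theorem exists_countable_model_omitting [Countable L.Symbols] (hAE : IsAETheory L T)
    (hK : K.Nonempty) {Q : Set (MType L)} (hQ : Q.Countable)
    (hQuniv : ∀ q ∈ Q, IsUniversalMType L q) (hQK : ∀ q ∈ Q, ¬ MESupported K q) :
    ∃ M : Theory.ModelType.{0, 0, 0} T, Countable M ∧ ∀ q ∈ Q, ¬ MRealizes M q := by
  obtain ⟨N, _, v, hv⟩ := Formula.exists_realize_of_dense (C := conditions K)
    (fun _ ⟨_, M, _, v, hv⟩ => ⟨M, inferInstance, v, hv⟩) (top_mem_conditions hK)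
    (countable_requirements hQ) (isDense_requirements hQuniv hQK)
  have := genericSubstructure_model hv hAE
  have : Nonempty (genericSubstructure hv) := ⟨genericAssignment hv 0⟩
  refine ⟨Theory.ModelType.of T (genericSubstructure hv),
    (genericAssignment_surjective hv).countable, fun q hq ⟨u, hu⟩ => ?_⟩
  obtain ⟨ψ, hψ, hψu⟩ := exists_not_realize_genericAssignment hv hq u
  exact hψu (hu ψ hψ)

end Paper

/-- Omitting types for `∀∃`-theories: if `K(T|P)` is nonempty and every
universal type in the countable set `Q` is existentially unsupported over `K(T|P)`, then
some countable model in `K(T|P)` omits every type in `Q`. -/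
theorem stmt_13 (L : FirstOrder.Language.{0, 0}) [Countable L.Symbols] (T : L.Theory)
    (hAE : Paper.IsAETheory L T)
    (P Q : Set (Paper.MType L)) (hP : P.Countable) (hQ : Q.Countable)
    (hPuniv : ∀ p ∈ P, Paper.IsUniversalMType L p)
    (hQuniv : ∀ q ∈ Q, Paper.IsUniversalMType L q)
    (hne : (Paper.KTP T P).Nonempty)
    (hQun : ∀ q ∈ Q, ¬ Paper.MESupported (Paper.KTP T P) q) :
    ∃ M ∈ Paper.KTP T P, Countable (M : Type) ∧ ∀ q ∈ Q, ¬ Paper.MRealizes M q := by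
  obtain ⟨M, hM, hPQ⟩ := Paper.exists_countable_model_omitting hAE hne (hP.union hQ)
    (fun q hq => hq.elim (hPuniv q) (hQuniv q))
    (fun q hq => hq.elim
      (fun hp => Paper.not_mESupported_of_forall_not_mRealizes fun _ hM => hM q hp) (hQun q))
  exact ⟨M, fun p hp => hPQ p (Or.inl hp), hM, fun q hq => hPQ q (Or.inr hq)⟩
end

section
/- Let T be an n-consistent ∀∃-theory in a countable language. Then for every n-generated model M of T, rk(M) ≤ Rk(M), where rk is the rank defined with full types and Rk is the rank defined with universal types. -/
open FirstOrder FirstOrder.Language Cardinal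

/-!
A structure generated by a tuple `b` is determined up to isomorphism by the quantifier-free
type of `b`, hence by its universal type. So an existential formula supporting `p_{ā,∀}(M)`
over `K(T|Q_{n,γ})` isolates the isomorphism class of `(M, ā)` there. By induction on `γ`, a
model with `Rk = β < γ` has `rk ≤ β`, which gives `K(T|P_{n,γ}) ⊆ K(T|Q_{n,γ})`; and if
`rk(M) ≮ γ` then `(M, ā) ∈ K(T|P_{n,γ})`. The same formula therefore supports the complete
type `p_ā(M)` over `K(T|P_{n,γ})`, i.e. `rk(M) = γ`.
-/

namespace Paper

variable {L : FirstOrder.Language.{0, 0}}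

section Structures

variable {A B : Type*} [L.Structure A] [L.Structure B] {n : ℕ}

lemma realize_relabel_inl {β : Type*} (ψ : L.Formula (Fin n)) (a : Fin n → A) (v : β → A) :
    (ψ.relabel Sum.inl : L.Formula (Fin n ⊕ β)).Realize (Sum.elim a v) ↔ ψ.Realize a := by
  rw [Formula.realize_relabel, Sum.elim_comp_inl]

lemma realizesNType_pType_iff (a : Fin n → A) :
    RealizesNType a (pType L n) ↔ ∃ y : A, ∀ t : L.Term (Fin n), t.realize a ≠ y := by
  have realize_pType : ∀ (t : L.Term (Fin n)) (y : A),
      ((Term.equal (t.relabel Sum.inl) (Term.var (Sum.inr 0))).not :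
        L.Formula (Fin n ⊕ Fin 1)).Realize (Sum.elim a fun _ => y) ↔ t.realize a ≠ y := by
    intro t y
    simp only [Formula.realize_not, Formula.realize_equal, Term.realize_relabel,
      Term.realize_var, Sum.elim_inr, Sum.elim_comp_inl]
  constructor
  · rintro ⟨v : Fin 1 → A, hv⟩
    refine ⟨v 0, fun t => ?_⟩
    have hv0 : (fun _ => v 0) = v := funext fun i => by rw [Subsingleton.elim i 0]
    rw [← realize_pType, hv0]
    exact hv _ ⟨t, rfl⟩
  · rintro ⟨y, hy⟩
    refine ⟨fun _ => y, ?_⟩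
    rintro _ ⟨t, rfl⟩
    exact (realize_pType t y).2 (hy t)

lemma not_realizesNType_pType_iff (a : Fin n → A) :
    ¬ RealizesNType a (pType L n) ↔ Generates L a := by
  simp [realizesNType_pType_iff, Generates]

lemma realize_of_mem_ctype {a : Fin n → A} {φ : L.Formula (Fin n ⊕ Fin 0)}
    (hφ : φ ∈ (ctype (L := L) a).2) (v : Fin 0 → A) : φ.Realize (Sum.elim a v) := by
  obtain ⟨ψ, hψ, rfl⟩ := hφ
  exact (realize_relabel_inl ψ a v).2 hψ

lemma realizesNType_ctype_self (a : Fin n → A) : RealizesNType a (ctype (L := L) a) :=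
  ⟨finZeroElim, fun _ hφ => realize_of_mem_ctype hφ _⟩

lemma RealizesNType.utype_of_ctype {a : Fin n → A} {b : Fin n → B}
    (h : RealizesNType a (ctype (L := L) b)) : RealizesNType a (utype (L := L) b) :=
  let ⟨v, hv⟩ := h
  ⟨v, fun _ ⟨ψ, _, hψ, hφ⟩ => hv _ ⟨ψ, hψ, hφ⟩⟩

lemma RealizesNType.realize_of_isQF_utype {a : Fin n → A} {b : Fin n → B}
    (h : RealizesNType a (utype (L := L) b)) {ψ : L.Formula (Fin n)} (hψ : ψ.IsQF)
    (hb : ψ.Realize b) : ψ.Realize a := by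
  obtain ⟨v, hv⟩ := h
  exact (realize_relabel_inl ψ a v).1 (hv _ ⟨ψ, ⟨0, ψ, hψ, rfl⟩, hb, rfl⟩)

lemma realize_iff_of_isQF {a : Fin n → A} {b : Fin n → B}
    (h : ∀ ψ : L.Formula (Fin n), ψ.IsQF → ψ.Realize b → ψ.Realize a)
    {ψ : L.Formula (Fin n)} (hψ : ψ.IsQF) : ψ.Realize b ↔ ψ.Realize a :=
  ⟨h ψ hψ, fun ha => by_contra fun hb => h _ hψ.not (Formula.realize_not.2 hb) ha⟩

/-- The isomorphism sends each `t(b̄)` to `t(ā)`; the quantifier-free type makes this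
well defined and injective, and generation makes it total and surjective. -/
lemma exists_equiv_comp_eq_of_isQF {a : Fin n → A} {b : Fin n → B}
    (ha : Generates L a) (hb : Generates L b)
    (h : ∀ ψ : L.Formula (Fin n), ψ.IsQF → ψ.Realize b → ψ.Realize a) :
    ∃ e : B ≃[L] A, ⇑e ∘ b = a := by
  have term_eq_iff : ∀ t s : L.Term (Fin n),
      t.realize b = s.realize b ↔ t.realize a = s.realize a := fun t s => by
    have := realize_iff_of_isQF (ψ := t.equal s) h (BoundedFormula.IsAtomic.equal _ _).isQF
    simpa only [Formula.realize_equal] using this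
  have relMap_iff : ∀ {m : ℕ} (r : L.Relations m) (ts : Fin m → L.Term (Fin n)),
      (Structure.RelMap r fun i => (ts i).realize b) ↔
        Structure.RelMap r fun i => (ts i).realize a := by
    intro m r ts
    have := realize_iff_of_isQF (ψ := r.formula ts) h (BoundedFormula.IsAtomic.rel _ _).isQF
    simpa only [Formula.realize_rel] using this
  choose g hg using hb
  set f : B → A := fun y => (g y).realize a
  have hf : ∀ t : L.Term (Fin n), f (t.realize b) = t.realize a :=
    fun t => (term_eq_iff _ t).1 (hg _)
  have hv : ∀ {m : ℕ} (v : Fin m → B), v = fun i => (g (v i)).realize b :=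
    fun v => funext fun i => (hg (v i)).symm
  have injective : Function.Injective f := fun y y' hyy' => by
    simpa only [hg] using (term_eq_iff (g y) (g y')).2 hyy'
  have surjective : Function.Surjective f := fun x => by
    obtain ⟨t, rfl⟩ := ha x
    exact ⟨t.realize b, hf t⟩
  refine ⟨{ toEquiv := Equiv.ofBijective f ⟨injective, surjective⟩
            map_fun' := fun F v => ?_
            map_rel' := fun r v => ?_ }, funext fun i => hf (Term.var i)⟩
  · change f (Structure.funMap F v) = Structure.funMap F (f ∘ v)
    conv_lhs => rw [hv v]
    exact hf (Term.func F fun i => g (v i))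
  · change Structure.RelMap r (f ∘ v) ↔ Structure.RelMap r v
    conv_rhs => rw [hv v]
    exact (relMap_iff r fun i => g (v i)).symm

lemma exists_equiv_comp_eq_of_realizesNType_utype {a : Fin n → A} {b : Fin n → B}
    (ha : Generates L a) (hb : Generates L b) (h : RealizesNType a (utype (L := L) b)) :
    ∃ e : B ≃[L] A, ⇑e ∘ b = a :=
  exists_equiv_comp_eq_of_isQF ha hb fun _ hψ => h.realize_of_isQF_utype hψ

lemma Generates.equiv_comp (e : B ≃[L] A) {b : Fin n → B} (hb : Generates L b) :
    Generates L (⇑e ∘ b) := fun y => by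
  obtain ⟨t, ht⟩ := hb (e.symm y)
  exact ⟨t, by rw [HomClass.realize_term, ht, e.apply_symm_apply]⟩

lemma ctype_equiv_comp (e : B ≃[L] A) (b : Fin n → B) :
    ctype (L := L) (⇑e ∘ b) = ctype (L := L) b := by
  refine congrArg (Sigma.mk 0) (Set.ext fun φ => ?_)
  simp only [StrongHomClass.realize_formula]

lemma realize_sumElim_finZero_of_equiv (e : B ≃[L] A) {b : Fin n → B} {a : Fin n → A}
    (he : ⇑e ∘ b = a) (φ : L.Formula (Fin n ⊕ Fin 0)) (v : Fin 0 → B) (w : Fin 0 → A) :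
    φ.Realize (Sum.elim b v) ↔ φ.Realize (Sum.elim a w) := by
  rw [← StrongHomClass.realize_formula e, Sum.comp_elim, he, Subsingleton.elim (⇑e ∘ v) w]

end Structures

section Ranks

variable {T : L.Theory} {n : ℕ}

lemma rankEq_iff {α : Ordinal.{0}} {M : Theory.ModelType.{0, 0, 0} T} :
    RankEq T n α M ↔ 1 ≤ α ∧ (∃ a : Fin n → M, Generates L a) ∧
      ∀ a : Fin n → M, Generates L a → Supported (Kclass T n α) (ctype a) := by
  rw [RankEq, WellFounded.fix_eq]
  rfl

lemma uRankEq_iff {α : Ordinal.{0}} {M : Theory.ModelType.{0, 0, 0} T} :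
    URankEq T n α M ↔ 1 ≤ α ∧ (∃ a : Fin n → M, Generates L a) ∧
      ∀ a : Fin n → M, Generates L a → ESupported (UKclass T n α) (utype a) := by
  rw [URankEq, WellFounded.fix_eq]
  rfl

lemma RankEq.of_equiv {α : Ordinal.{0}} {M N : Theory.ModelType.{0, 0, 0} T}
    (e : M ≃[L] N) (h : RankEq T n α M) : RankEq T n α N := by
  obtain ⟨hα, ⟨a, ha⟩, hsupp⟩ := rankEq_iff.1 h
  refine rankEq_iff.2 ⟨hα, ⟨⇑e ∘ a, ha.equiv_comp e⟩, fun b hb => ?_⟩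
  simpa only [ctype_equiv_comp] using hsupp _ (hb.equiv_comp e.symm)

lemma Generates.of_mem_uKclass {γ : Ordinal.{0}}
    {P : Σ M : Theory.ModelType.{0, 0, 0} T, Fin n → M}
    (hP : P ∈ UKclass T n γ) : Generates L P.2 :=
  (not_realizesNType_pType_iff P.2).1 hP.1

lemma mk_mem_kclass {γ : Ordinal.{0}} {M : Theory.ModelType.{0, 0, 0} T} {a : Fin n → M}
    (ha : Generates L a) (hM : ∀ β < γ, ¬ RankEq T n β M) :
    (⟨M, a⟩ : Σ N : Theory.ModelType.{0, 0, 0} T, Fin n → N) ∈ Kclass T n γ := by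
  refine ⟨(not_realizesNType_pType_iff a).2 ha, fun β hβ N hN b hb hab => ?_⟩
  obtain ⟨e, -⟩ := exists_equiv_comp_eq_of_realizesNType_utype ha hb hab.utype_of_ctype
  exact hM β hβ (hN.of_equiv e)

lemma kclass_subset_uKclass {γ : Ordinal.{0}}
    (ih : ∀ β < γ, ∀ N : Theory.ModelType.{0, 0, 0} T,
      URankEq T n β N → ∃ δ ≤ β, RankEq T n δ N) :
    Kclass T n γ ⊆ UKclass T n γ := by
  rintro P ⟨hP, hPK⟩
  have hPgen : Generates L P.2 := (not_realizesNType_pType_iff P.2).1 hP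
  refine ⟨hP, fun β hβ N hN b hb hPb => ?_⟩
  obtain ⟨e, -⟩ := exists_equiv_comp_eq_of_realizesNType_utype hPgen hb hPb
  obtain ⟨δ, hδβ, hδ⟩ := ih β hβ N hN
  exact hPK δ (hδβ.trans_lt hβ) P.1 (hδ.of_equiv e) P.2 hPgen (realizesNType_ctype_self P.2)

lemma ESupported.supported_ctype {K K' : Set (Σ M : Theory.ModelType.{0, 0, 0} T, Fin n → M)}
    (hKK' : K ⊆ K') (hK' : ∀ P ∈ K', Generates L P.2) {M : Theory.ModelType.{0, 0, 0} T}
    {a : Fin n → M} (ha : Generates L a) (hMa : ⟨M, a⟩ ∈ K)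
    (h : ESupported K' (utype (L := L) a)) : Supported K (ctype (L := L) a) := by
  obtain ⟨φ, -, ⟨P, hP, v, hv⟩, hforce⟩ := h
  have equiv_of_realize : ∀ Q ∈ K', ∀ w : Fin 0 → Q.1, φ.Realize (Sum.elim Q.2 w) →
      ∃ e : M ≃[L] Q.1, ⇑e ∘ a = Q.2 := fun Q hQ w hw =>
    exists_equiv_comp_eq_of_realizesNType_utype (hK' Q hQ) ha ⟨w, hforce Q hQ w hw⟩
  obtain ⟨e, he⟩ := equiv_of_realize P hP v hv
  refine ⟨φ, ⟨⟨M, a⟩, hMa, finZeroElim,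
    (realize_sumElim_finZero_of_equiv e he φ _ v).2 hv⟩, fun Q hQ w hw ψ hψ => ?_⟩
  obtain ⟨e', he'⟩ := equiv_of_realize Q (hKK' hQ) w hw
  exact (realize_sumElim_finZero_of_equiv e' he' ψ finZeroElim w).1
    (realize_of_mem_ctype hψ _)

theorem exists_rankEq_le_of_uRankEq (γ : Ordinal.{0}) (M : Theory.ModelType.{0, 0, 0} T)
    (hM : URankEq T n γ M) : ∃ δ ≤ γ, RankEq T n δ M := by
  induction γ using WellFoundedLT.induction generalizing M with
  | ind γ ih =>
    by_cases hlow : ∃ δ < γ, RankEq T n δ M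
    · obtain ⟨δ, hδ, h⟩ := hlow
      exact ⟨δ, hδ.le, h⟩
    push Not at hlow
    obtain ⟨hγ, hgen, hsupp⟩ := uRankEq_iff.1 hM
    refine ⟨γ, le_rfl, rankEq_iff.2 ⟨hγ, hgen, fun a ha => ?_⟩⟩
    exact (hsupp a ha).supported_ctype (kclass_subset_uKclass ih)
      (fun _ => Generates.of_mem_uKclass) ha (mk_mem_kclass ha hlow)

end Ranks

end Paper

theorem stmt_14_general (L : FirstOrder.Language.{0, 0}) (T : L.Theory) (n : ℕ)
    (M : FirstOrder.Language.Theory.ModelType.{0, 0, 0} T) :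
    ∀ γ : Ordinal, Paper.URankEq T n γ M →
      ∃ δ : Ordinal, δ ≤ γ ∧ Paper.RankEq T n δ M :=
  fun γ => Paper.exists_rankEq_le_of_uRankEq γ M

/-- For an `n`-consistent `∀∃`-theory `T`, every `n`-generated model `M`
satisfies `rk(M) ≤ Rk(M)` (whenever `Rk(M)` is an ordinal, `rk(M)` is an ordinal `≤` it). -/
theorem stmt_14 (L : FirstOrder.Language.{0, 0}) [Countable L.Symbols] (T : L.Theory)
    (hAE : Paper.IsAETheory L T) (n : ℕ) (hcons : Paper.NConsistent L T n)
    (M : FirstOrder.Language.Theory.ModelType.{0, 0, 0} T)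
    (hgen : ∃ a : Fin n → M, Paper.Generates L a) :
    ∀ γ : Ordinal, Paper.URankEq T n γ M →
      ∃ δ : Ordinal, δ ≤ γ ∧ Paper.RankEq T n δ M :=
  stmt_14_general L T n M
end
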